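/- arXiv:0803.3344 — 2 statements merged into one kernel-verified Lean document; each statement's English description precedes it below -/
import Mathlib

section
/- Let M ∈ ℕ∪{∞}, let c_k ∈ (−1,1) for 1 ≤ k < M+1, let λ ∈ (0,1) and C > 0, and for each small t ≠ 0 let s_{k,t} ∈ ℝ satisfy |s_{k,t}| ≤ C·λ^k for all k and lim_{t→0} s_{k,t} = s_k for each k. Let h_t: I → I be increasing homeomorphisms with h_0 = id such that (h_t(x) − x)/t converges as t → 0, uniformly in x ∈ I, to a continuous function α: I → ℝ. Then for every continuous ψ: I → ℝ, lim_{t→0} (1/t) ∫_I ψ(x)·Σ_k s_{k,t}·(H_{h_t(c_k)}(x) − H_{c_k}(x)) dx = −Σ_k α(c_k)·s_k·ψ(c_k). -/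
open MeasureTheory Set Filter Topology
open scoped Classical

noncomputable section

/-- The interval `I = [-1,1]`. -/
def II : Set ℝ := Set.Icc (-1) 1

/-- Data of a piecewise `C^k` map on `I`: the map together with its one-sided
derivative functions on `[-1,0]` and `[0,1]`. -/
structure PEUData where
  f : ℝ → ℝ
  dL : ℝ → ℝ
  dR : ℝ → ℝ

/-- The derivative `f'` away from the critical point `0`
(for `x < 0` the left branch derivative, for `x ≥ 0` the right branch one;
at `x = 0` it is the right one-sided derivative `f'_+(0)`). -/
def PEUData.d (F : PEUData) (x : ℝ) : ℝ := if x < 0 then F.dL x else F.dR x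

/-- The second derivative `f''` away from the critical point. -/
def PEUData.d2 (F : PEUData) (x : ℝ) : ℝ :=
  if x < 0 then derivWithin F.dL (Set.Icc (-1:ℝ) 0) x
  else derivWithin F.dR (Set.Icc (0:ℝ) 1) x

/-- `F` is a piecewise expanding `C^k` unimodal map. -/
def IsPEU (k : ℕ) (F : PEUData) : Prop :=
  ContinuousOn F.f II ∧
  ContDiffOn ℝ k F.f (Set.Icc (-1:ℝ) 0) ∧ ContDiffOn ℝ k F.f (Set.Icc (0:ℝ) 1) ∧
  (∀ x ∈ Set.Icc (-1:ℝ) 0, HasDerivWithinAt F.f (F.dL x) (Set.Icc (-1:ℝ) 0) x) ∧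
  (∀ x ∈ Set.Icc (0:ℝ) 1, HasDerivWithinAt F.f (F.dR x) (Set.Icc (0:ℝ) 1) x) ∧
  F.f (-1) = -1 ∧ F.f 1 = -1 ∧
  (∃ L > 1, (∀ x ∈ Set.Icc (-1:ℝ) 0, x ≠ 0 → L ≤ |F.dL x|) ∧
      (∀ x ∈ Set.Icc (0:ℝ) 1, x ≠ 0 → L ≤ |F.dR x|)) ∧
  F.f 0 ≤ 1

/-- The critical orbit `c_j = f^j(0)`. -/
def PEUData.c (F : PEUData) (j : ℕ) : ℝ := F.f^[j] 0

/-- The critical point `0` is periodic. -/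
def PEUData.critPer (F : PEUData) : Prop := ∃ q, 0 < q ∧ F.f^[q] 0 = 0

/-- Minimal period of the critical point (junk value `0` if `0` is not periodic). -/
def PEUData.period (F : PEUData) : ℕ := sInf {q : ℕ | 0 < q ∧ F.f^[q] 0 = 0}

/-- `(f^j)'(c_1) = ∏_{i<j} f'(c_{i+1})`. -/
def PEUData.iterD (F : PEUData) (j : ℕ) : ℝ := ∏ i ∈ Finset.range j, F.d (F.c (i+1))

/-- The `j`-th term `v(c_j)/(f^j)'(c_1)` of the series defining `J(f,v)`. -/
def PEUData.Jterm (F : PEUData) (v : ℝ → ℝ) (j : ℕ) : ℝ := v (F.c j) / F.iterD j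

/-- `J(f,v) = ∑_{j=0}^{M_f-1} v(c_j)/(f^j)'(c_1)`. -/
def PEUData.J (F : PEUData) (v : ℝ → ℝ) : ℝ :=
  if F.critPer then ∑ j ∈ Finset.range F.period, F.Jterm v j else ∑' j, F.Jterm v j

/-- `F` is good: either `0` is not periodic, or
`|(f^{q-1})'(f(0))| · min(|f'_+(0)|, |f'_-(0)|) > 2`. -/
def PEUData.Good (F : PEUData) : Prop :=
  ¬ F.critPer ∨ 2 < |F.iterD (F.period - 1)| * min |F.dR 0| |F.dL 0|

/-- Topological mixing of `f` on a set `s`. -/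
def TopMixingOn (f : ℝ → ℝ) (s : Set ℝ) : Prop :=
  ∀ U V : Set ℝ, IsOpen U → IsOpen V → (U ∩ s).Nonempty → (V ∩ s).Nonempty →
    ∃ N, ∀ n ≥ N, (f^[n] '' (U ∩ s) ∩ V).Nonempty

/-- `F` is mixing: topologically mixing on `[c_2, c_1]`. -/
def PEUData.Mixing (F : PEUData) : Prop :=
  TopMixingOn F.f (Set.Icc (F.f (F.f 0)) (F.f 0))

/-- `u` is `β`-Hölder on `I`. -/
def IsHolderOn (β : ℝ) (u : ℝ → ℝ) : Prop :=
  ∃ K : ℝ, ∀ x ∈ II, ∀ y ∈ II, |u x - u y| ≤ K * |x - y| ^ β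

/-- The `β`-Hölder norm `|u|_β = sup_I |u| + sup_{x≠y} |u(x)-u(y)|/|x-y|^β`. -/
def holderNorm (β : ℝ) (u : ℝ → ℝ) : ℝ :=
  (⨆ x : II, |u (x : ℝ)|) +
    ⨆ q : {q : ℝ × ℝ // q.1 ∈ II ∧ q.2 ∈ II ∧ q.1 ≠ q.2},
      |u q.1.1 - u q.1.2| / |q.1.1 - q.1.2| ^ β

/-- The `B^k` norm: the max of the `C^k` norms on `[-1,0]` and on `[0,1]`. -/
def BnormK (k : ℕ) (g : ℝ → ℝ) : ℝ :=
  max (⨆ j : Fin (k+1), ⨆ x : Set.Icc (-1:ℝ) 0,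
        |iteratedDerivWithin j.1 g (Set.Icc (-1:ℝ) 0) x|)
      (⨆ j : Fin (k+1), ⨆ x : Set.Icc (0:ℝ) 1,
        |iteratedDerivWithin j.1 g (Set.Icc (0:ℝ) 1) x|)

/-- Data of a family `t ↦ f_t`: `T a t` is the `a`-th `t`-derivative of `f_t`
(so `T 0 t = f_t`), and `dL t`, `dR t` are the one-sided spatial derivatives of `f_t`. -/
structure PEFam where
  T : ℕ → ℝ → ℝ → ℝ
  dL : ℝ → ℝ → ℝ
  dR : ℝ → ℝ → ℝ

def PEFam.f (fam : PEFam) (t : ℝ) : ℝ → ℝ := fam.T 0 t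

def PEFam.toData (fam : PEFam) (t : ℝ) : PEUData := ⟨fam.T 0 t, fam.dL t, fam.dR t⟩

/-- Spatial derivative `f'_t` of the member `f_t` of a family. -/
def PEFam.d (fam : PEFam) (t x : ℝ) : ℝ := if x < 0 then fam.dL t x else fam.dR t x

/-- `H t` is the derivative of `t ↦ G t` at `t` (within `s`) w.r.t. the `B^k` norm. -/
def BDerivWithinAt (k : ℕ) (s : Set ℝ) (G H : ℝ → ℝ → ℝ) (t : ℝ) : Prop :=
  Tendsto (fun u => BnormK k (fun x => G u x - G t x - (u - t) * H t x) / |u - t|)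
    (𝓝[s \ {t}] t) (𝓝 0)

/-- `t ↦ G t` is continuous at `t` (within `s`) w.r.t. the `B^k` norm. -/
def BContWithinAt (k : ℕ) (s : Set ℝ) (G : ℝ → ℝ → ℝ) (t : ℝ) : Prop :=
  Tendsto (fun u => BnormK k (fun x => G u x - G t x)) (𝓝[s] t) (𝓝 0)

/-- `fam` is a `C^j` family of piecewise expanding `C^k` unimodal maps on `(-ε,ε)`:
each `f_t ∈ U^k`, and `t ↦ f_t` is `C^j` as a map into `(B^k, ‖·‖_{B^k})`, the
successive `t`-derivatives being the `fam.T a`. -/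
def IsPEFam (j k : ℕ) (ε : ℝ) (fam : PEFam) : Prop :=
  0 < ε ∧ (∀ t ∈ Set.Ioo (-ε) ε, IsPEU k (fam.toData t)) ∧
  (∀ a < j, ∀ t ∈ Set.Ioo (-ε) ε,
    BDerivWithinAt k (Set.Ioo (-ε) ε) (fam.T a) (fam.T (a+1)) t) ∧
  (∀ a ≤ j, ∀ t ∈ Set.Ioo (-ε) ε, BContWithinAt k (Set.Ioo (-ε) ε) (fam.T a) t)

/-- A self-homeomorphism of `I` (continuous bijection of the compact interval). -/
def IsHomeoI (h : ℝ → ℝ) : Prop := ContinuousOn h II ∧ Set.BijOn h II II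

/-- The family is in the topological class of `f_0`, witnessed by conjugacies `h_t`:
`h_0 = id` and `h_t ∘ f_0 = f_t ∘ h_t`. -/
def InTopClass (ε : ℝ) (fam : PEFam) (h : ℝ → ℝ → ℝ) : Prop :=
  (∀ x ∈ II, h 0 x = x) ∧
  ∀ t ∈ Set.Ioo (-ε) ε, IsHomeoI (h t) ∧ ∀ x ∈ II, h t (fam.f 0 x) = fam.f t (h t x)

/-- The family is tangent at `t = 0` to the topological class of `f_0`. -/
def TangentToTopClass (j k : ℕ) (ε : ℝ) (fam : PEFam) : Prop :=
  ∃ ε' : ℝ, 0 < ε' ∧ ∃ fam' : PEFam, IsPEFam j k ε' fam' ∧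
    (∃ h, InTopClass ε' fam' h) ∧
    (∀ x ∈ II, fam'.f 0 x = fam.f 0 x) ∧ (∀ x ∈ II, fam'.T 1 0 x = fam.T 1 0 x)

/-- `μ` is the SRB measure of `F`: an invariant Borel probability measure on `I`
absolutely continuous w.r.t. Lebesgue. -/
def IsSRB (F : PEUData) (μ : Measure ℝ) : Prop :=
  IsProbabilityMeasure μ ∧ μ ≪ volume ∧ μ IIᶜ = 0 ∧
  ∀ s : Set ℝ, MeasurableSet s → μ (F.f ⁻¹' s) = μ s

/-- `ψ` is `C^j` on `I` with Lipschitz `j`-th derivative. -/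
def CjLip (j : ℕ) (ψ : ℝ → ℝ) : Prop :=
  ContDiffOn ℝ j ψ II ∧ ∃ K : NNReal, LipschitzOnWith K (iteratedDerivWithin j ψ II) II

/-- `(∑_{i<n} |φ(x_{i+1}) - φ(x_i)|^p)^{1/p}` for a finite increasing sequence
`w = (n, x)`. -/
def pvarSum (p : ℝ) (φ : ℝ → ℝ) (w : ℕ × (ℕ → ℝ)) : ℝ :=
  (∑ i ∈ Finset.range w.1, |φ (w.2 (i+1)) - φ (w.2 i)| ^ p) ^ (1/p)

/-- The `p`-variation of `φ`. -/
def varP (p : ℝ) (φ : ℝ → ℝ) : ℝ :=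
  ⨆ w : {w : ℕ × (ℕ → ℝ) // StrictMonoOn w.2 (Set.Iic w.1)}, pvarSum p φ w.1

/-- `φ` represents an element of `BV_p`: supported in `I` with finite `p`-variation. -/
def MemBVp (p : ℝ) (φ : ℝ → ℝ) : Prop :=
  (∀ x, x ∉ II → φ x = 0) ∧
  BddAbove (Set.range fun w : {w : ℕ × (ℕ → ℝ) // StrictMonoOn w.2 (Set.Iic w.1)} =>
    pvarSum p φ w.1)

/-- The `BV_p` norm: infimum of `var_p` over representatives differing from `φ`
on an at most countable set. -/
def BVpNorm (p : ℝ) (φ : ℝ → ℝ) : ℝ :=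
  ⨅ ψ : {ψ : ℝ → ℝ // {x | ψ x ≠ φ x}.Countable}, varP p ψ.1

/-- `H t` is the derivative of the curve `t ↦ G t ∈ BV_p` at `t` (within `s`). -/
def BVDerivWithinAt (p : ℝ) (s : Set ℝ) (G H : ℝ → ℝ → ℝ) (t : ℝ) : Prop :=
  Tendsto (fun u => BVpNorm p (fun x => G u x - G t x - (u - t) * H t x) / |u - t|)
    (𝓝[s \ {t}] t) (𝓝 0)

/-- Continuity of the curve `t ↦ G t ∈ BV_p` at `t` (within `s`). -/
def BVContWithinAt (p : ℝ) (s : Set ℝ) (G : ℝ → ℝ → ℝ) (t : ℝ) : Prop :=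
  Tendsto (fun u => BVpNorm p (fun x => G u x - G t x)) (𝓝[s] t) (𝓝 0)

/-- `t ↦ G t` is a `C¹` map from `(-ε,ε)` to `BV_p`, with derivative `t ↦ H t`. -/
def C1IntoBVp (p ε : ℝ) (G H : ℝ → ℝ → ℝ) : Prop :=
  (∀ t ∈ Set.Ioo (-ε) ε, MemBVp p (G t) ∧ MemBVp p (H t)) ∧
  (∀ t ∈ Set.Ioo (-ε) ε, BVDerivWithinAt p (Set.Ioo (-ε) ε) G H t) ∧
  (∀ t ∈ Set.Ioo (-ε) ε, BVContWithinAt p (Set.Ioo (-ε) ε) H t)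

/-- The norm of the Banach space of `C¹` maps from `(-ε,ε)` to `BV_p`, applied
to a map `G` with derivative `H`. -/
def C1BVNorm (p ε : ℝ) (G H : ℝ → ℝ → ℝ) : ℝ :=
  (⨆ t : Set.Ioo (-ε) ε, BVpNorm p (G (t : ℝ))) +
    ⨆ t : Set.Ioo (-ε) ε, BVpNorm p (H (t : ℝ))

/-- `t ↦ G 0 t` is a `C^j` map from `(-ε,ε)` to `BV_p`, with successive
`t`-derivatives `G a`. -/
def CjIntoBVp (p ε : ℝ) (j : ℕ) (G : ℕ → ℝ → ℝ → ℝ) : Prop :=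
  (∀ a ≤ j, ∀ t ∈ Set.Ioo (-ε) ε, MemBVp p (G a t)) ∧
  (∀ a < j, ∀ t ∈ Set.Ioo (-ε) ε, BVDerivWithinAt p (Set.Ioo (-ε) ε) (G a) (G (a+1)) t) ∧
  (∀ a ≤ j, ∀ t ∈ Set.Ioo (-ε) ε, BVContWithinAt p (Set.Ioo (-ε) ε) (G a) t)

/-- The norm of the Banach space of `C^j` maps from `(-ε,ε)` to `BV_p`. -/
def CjBVNorm (p ε : ℝ) (j : ℕ) (G : ℕ → ℝ → ℝ → ℝ) : ℝ :=
  ∑ a ∈ Finset.range (j+1), ⨆ t : Set.Ioo (-ε) ε, BVpNorm p (G a (t : ℝ))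

/-- Piecewise (one-sided) derivative of a function in `B^1`. -/
def pwDeriv (v : ℝ → ℝ) (x : ℝ) : ℝ :=
  if x < 0 then derivWithin v (Set.Icc (-1:ℝ) 0) x else derivWithin v (Set.Icc (0:ℝ) 1) x

/-- The Heaviside-type function `H_u`. -/
def Heav (u x : ℝ) : ℝ := if x < u then -1 else if x = u then -(1/2) else 0

/-- The weight `g_{s,t}(y) = exp(s ψ(h_t(y)))/|f'_t(h_t(y))|`, as an element of `BV_p`
(extended by `0` outside `I`). -/
def gfun (fam : PEFam) (h : ℝ → ℝ → ℝ) (ψ : ℝ → ℝ) (s t x : ℝ) : ℝ :=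
  if x ∈ II then Real.exp (s * ψ (h t x)) / |fam.d t (h t x)| else 0

end

/-!
Write `∫_I ψ · (H_a - H_b) = -∫_b^a ψ`, so that after exchanging sum and integral the quantity
is `-∑_k s_{k,t} · (1/t) ∫_{c_k}^{h_t(c_k)} ψ`. Each term tends to `s_k ψ(c_k) α(c_k)` by the
chain rule for `t ↦ ∫_{c_k}^{h_t(c_k)} ψ` at `t = 0`. Uniform convergence bounds
`|h_t(x) - x| / |t|`, so the terms are dominated by `C λ^k`, and Tannery's theorem finishes.
-/

lemma TendstoUniformlyOn.exists_eventually_norm_le {ι α E : Type*} [SeminormedAddCommGroup E]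
    {F : ι → α → E} {f : α → E} {l : Filter ι} [l.NeBot] {s : Set α}
    (hF : TendstoUniformlyOn F f l s) (hb : ∀ᶠ i in l, ∃ B, ∀ x ∈ s, ‖F i x‖ ≤ B) :
    ∃ B, ∀ᶠ i in l, ∀ x ∈ s, ‖F i x‖ ≤ B := by
  have hclose := Metric.tendstoUniformlyOn_iff.mp hF 1 one_pos
  obtain ⟨i₀, ⟨B, hB⟩, hi₀⟩ := (hb.and hclose).exists
  refine ⟨B + 2, hclose.mono fun i hi x hx => ?_⟩
  calc ‖F i x‖ = dist (F i x) 0 := (dist_zero_right _).symm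
    _ ≤ dist (F i x) (f x) + dist (f x) (F i₀ x) + dist (F i₀ x) 0 := dist_triangle4 _ _ _ _
    _ ≤ 1 + 1 + B := by
      rw [dist_comm, dist_zero_right]
      gcongr
      exacts [(hi x hx).le, (hi₀ x hx).le, hB x hx]
    _ = B + 2 := by ring

lemma integral_tsum_of_norm_le {ι α E : Type*} [Countable ι] [MeasurableSpace α]
    [NormedAddCommGroup E] [NormedSpace ℝ E] [CompleteSpace E]
    {μ : Measure α} [IsFiniteMeasure μ] {F : ι → α → E} {b : ι → ℝ}
    (hF : ∀ i, AEStronglyMeasurable (F i) μ) (hb : Summable b)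
    (hFb : ∀ i, ∀ᵐ x ∂μ, ‖F i x‖ ≤ b i) :
    ∫ x, ∑' i, F i x ∂μ = ∑' i, ∫ x, F i x ∂μ := by
  refine (hasSum_integral_of_dominated_convergence (fun i _ => b i) hF hFb
    (ae_of_all _ fun _ => hb) (integrable_const _) ?_).tsum_eq.symm
  filter_upwards [ae_all_iff.2 hFb] with x hx
  exact (hb.of_norm_bounded hx).hasSum

lemma measurable_heav (u : ℝ) : Measurable (Heav u) :=
  Measurable.ite measurableSet_Iio measurable_const
    (Measurable.ite (measurableSet_singleton u) measurable_const measurable_const)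

lemma abs_heav_le_one (u x : ℝ) : |Heav u x| ≤ 1 := by
  unfold Heav; split_ifs <;> norm_num

lemma abs_heav_sub_heav_le_one (a b x : ℝ) : |Heav a x - Heav b x| ≤ 1 := by
  unfold Heav; split_ifs <;> norm_num

lemma setIntegral_mul_heav {l r u : ℝ} (hu : u ∈ Icc l r) (ψ : ℝ → ℝ) :
    ∫ x in Icc l r, ψ x * Heav u x = -∫ x in l..u, ψ x := by
  have hae : ∀ᵐ x ∂volume.restrict (Icc l r), ψ x * Heav u x = -(Iio u).indicator ψ x := by
    filter_upwards [ae_restrict_of_ae (measure_eq_zero_iff_ae_notMem.mp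
      (measure_singleton (μ := volume) u))] with x hx
    rw [mem_singleton_iff] at hx
    unfold Heav
    by_cases hxu : x < u
    · simp [hxu]
    · simp [hxu, hx]
  have hinter : Icc l r ∩ Iio u = Ico l u := by
    ext x
    exact ⟨fun ⟨⟨hlx, _⟩, hxu⟩ => ⟨hlx, hxu⟩, fun ⟨hlx, hxu⟩ => ⟨⟨hlx, hxu.le.trans hu.2⟩, hxu⟩⟩
  rw [integral_congr_ae hae, MeasureTheory.integral_neg, setIntegral_indicator measurableSet_Iio, hinter,
    integral_Ico_eq_integral_Ioc, intervalIntegral.integral_of_le hu.1]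

lemma setIntegral_mul_heav_sub {l r a b : ℝ} (ha : a ∈ Icc l r) (hb : b ∈ Icc l r)
    {ψ : ℝ → ℝ} (hψ : IntegrableOn ψ (Icc l r)) :
    ∫ x in Icc l r, ψ x * (Heav a x - Heav b x) = -∫ x in b..a, ψ x := by
  have hint : ∀ u, Integrable (fun x => ψ x * Heav u x) (volume.restrict (Icc l r)) := fun u =>
    hψ.mul_bdd (measurable_heav u).aestronglyMeasurable
      (ae_of_all _ (abs_heav_le_one u))
  have hII : ∀ u ∈ Icc l r, IntervalIntegrable ψ volume l u := fun u hu =>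
    (hψ.mono_set (uIcc_subset_Icc (left_mem_Icc.2 (hu.1.trans hu.2)) hu)).intervalIntegrable
  simp_rw [mul_sub]
  rw [integral_sub (hint a) (hint b), setIntegral_mul_heav ha, setIntegral_mul_heav hb,
    ← intervalIntegral.integral_interval_sub_left (hII a ha) (hII b hb)]
  ring

lemma setIntegral_mul_tsum_heav_sub {l r : ℝ} {ψ : ℝ → ℝ} (hψ : ContinuousOn ψ (Icc l r))
    {w : ℕ → ℝ} (hw : Summable w) {a b : ℕ → ℝ} (ha : ∀ k, a k ∈ Icc l r)
    (hb : ∀ k, b k ∈ Icc l r) :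
    ∫ x in Icc l r, ψ x * ∑' k, w k * (Heav (a k) x - Heav (b k) x)
      = -∑' k, w k * ∫ x in b k..a k, ψ x := by
  obtain ⟨M, hM⟩ := isCompact_Icc.exists_bound_of_continuousOn hψ
  have hmeas : ∀ k, AEStronglyMeasurable (fun x => ψ x * (w k * (Heav (a k) x - Heav (b k) x)))
      (volume.restrict (Icc l r)) := fun k =>
    (hψ.aestronglyMeasurable measurableSet_Icc).mul
      (measurable_const.mul ((measurable_heav _).sub (measurable_heav _))).aestronglyMeasurable
  have hbound : ∀ k, ∀ᵐ x ∂volume.restrict (Icc l r),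
      ‖ψ x * (w k * (Heav (a k) x - Heav (b k) x))‖ ≤ M * |w k| := fun k =>
    ae_restrict_of_forall_mem measurableSet_Icc fun x hx => by
      rw [norm_mul, norm_mul, Real.norm_eq_abs (w k), Real.norm_eq_abs (Heav _ x - _)]
      exact mul_le_mul (hM x hx) (mul_le_of_le_one_right (abs_nonneg _)
        (abs_heav_sub_heav_le_one _ _ x)) (by positivity) ((norm_nonneg _).trans (hM x hx))
  simp_rw [← tsum_mul_left (a := ψ _)]
  rw [integral_tsum_of_norm_le hmeas (hw.abs.mul_left M) hbound, ← tsum_neg]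
  refine tsum_congr fun k => ?_
  simp_rw [mul_left_comm (ψ _)]
  rw [integral_const_mul, setIntegral_mul_heav_sub (ha k) (hb k) (hψ.integrableOn_Icc), mul_neg]

lemma tendsto_integral_div_of_hasDerivAt {ψ g : ℝ → ℝ} {b L : ℝ} (hg0 : g 0 = b)
    (hg : HasDerivAt g L 0) (hψ : ContinuousAt ψ b)
    (hmeas : StronglyMeasurableAtFilter ψ (𝓝 b)) :
    Tendsto (fun t => (∫ x in b..g t, ψ x) / t) (𝓝[≠] 0) (𝓝 (ψ b * L)) := by
  subst hg0
  have hΦ := (intervalIntegral.integral_hasDerivAt_right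
    (IntervalIntegrable.refl (a := g 0)) hmeas hψ).comp 0 hg
  simpa [div_eq_inv_mul] using hΦ.tendsto_slope_zero

lemma hasDerivAt_zero_of_tendstoUniformlyOn {h : ℝ → ℝ → ℝ} {α : ℝ → ℝ} {s : Set ℝ}
    (h0 : ∀ x ∈ s, h 0 x = x)
    (hunif : TendstoUniformlyOn (fun t x => (h t x - x) / t) α (𝓝[≠] 0) s) {x : ℝ} (hx : x ∈ s) :
    HasDerivAt (fun t => h t x) (α x) 0 :=
  hasDerivAt_iff_tendsto_slope_zero.2 <| by
    simpa [h0 x hx, div_eq_inv_mul] using hunif.tendsto_at hx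

lemma exists_eventually_norm_div_sub_le {h : ℝ → ℝ → ℝ} {α : ℝ → ℝ} {l r : ℝ}
    (hmaps : ∀ t, MapsTo (h t) (Icc l r) (Icc l r))
    (hunif : TendstoUniformlyOn (fun t x => (h t x - x) / t) α (𝓝[≠] 0) (Icc l r)) :
    ∃ B, ∀ᶠ t in 𝓝[≠] 0, ∀ x ∈ Icc l r, ‖(h t x - x) / t‖ ≤ B :=
  hunif.exists_eventually_norm_le <| Eventually.of_forall fun t =>
    ⟨(r - l) / |t|, fun x hx => by
      have hhx := hmaps t hx
      rw [norm_div, Real.norm_eq_abs, Real.norm_eq_abs]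
      gcongr
      exact abs_sub_le_iff.2 ⟨by linarith [hhx.2, hx.1], by linarith [hhx.1, hx.2]⟩⟩

lemma norm_intervalIntegral_div_le {ψ : ℝ → ℝ} {l r a b M : ℝ}
    (hM : ∀ x ∈ Icc l r, ‖ψ x‖ ≤ M) (ha : a ∈ Icc l r) (hb : b ∈ Icc l r) (t : ℝ) :
    ‖(∫ x in a..b, ψ x) / t‖ ≤ M * ‖(b - a) / t‖ := by
  rw [norm_div, norm_div, Real.norm_eq_abs (b - a), ← mul_div_assoc]
  gcongr
  exact intervalIntegral.norm_integral_le_of_norm_le_const fun x hx =>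
    hM x (uIcc_subset_Icc ha hb (uIoc_subset_uIcc hx))

theorem stmt18_general (c : ℕ → ℝ) (hc : ∀ k, c k ∈ Set.Ioo (-1:ℝ) 1)
    (lam C : ℝ) (hlam : lam ∈ Set.Ioo (0:ℝ) 1)
    (s : ℝ → ℕ → ℝ) (s0 : ℕ → ℝ)
    (hbd : ∀ t k, |s t k| ≤ C * lam ^ k)
    (hconv : ∀ k, Tendsto (fun t => s t k) (𝓝[≠] 0) (𝓝 (s0 k)))
    (h : ℝ → ℝ → ℝ)
    (hhom : ∀ t, IsHomeoI (h t) ∧ StrictMonoOn (h t) II)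
    (h0 : ∀ x ∈ II, h 0 x = x)
    (α : ℝ → ℝ)
    (hunif : TendstoUniformlyOn (fun t x => (h t x - x) / t) α (𝓝[≠] 0) II) :
    ∀ ψ : ℝ → ℝ, ContinuousOn ψ II →
      Tendsto (fun t =>
          (1/t) * ∫ x in II, ψ x * ∑' k, s t k * (Heav (h t (c k)) x - Heav (c k) x))
        (𝓝[≠] 0) (𝓝 (-∑' k, α (c k) * s0 k * ψ (c k))) := by
  intro ψ hψ
  have hcI : ∀ k, c k ∈ II := fun k => Ioo_subset_Icc_self (hc k)
  have hmaps : ∀ t, MapsTo (h t) II II := fun t => (hhom t).1.2.mapsTo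
  have hgeom : Summable fun k => C * lam ^ k :=
    (summable_geometric_of_lt_one hlam.1.le hlam.2).mul_left C
  have hrewrite : ∀ t, (1/t) * ∫ x in II, ψ x * ∑' k, s t k * (Heav (h t (c k)) x - Heav (c k) x)
      = -∑' k, s t k * ((∫ x in c k..h t (c k), ψ x) / t) := fun t => by
    rw [II, setIntegral_mul_tsum_heav_sub hψ (hgeom.of_norm_bounded (hbd t))
      (fun k => hmaps t (hcI k)) hcI, mul_neg, ← tsum_mul_left]
    exact congrArg _ (tsum_congr fun k => by ring)
  have hterm : ∀ k, Tendsto (fun t => s t k * ((∫ x in c k..h t (c k), ψ x) / t)) (𝓝[≠] 0)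
      (𝓝 (s0 k * (ψ (c k) * α (c k)))) := fun k =>
    (hconv k).mul <| tendsto_integral_div_of_hasDerivAt (h0 _ (hcI k))
      (hasDerivAt_zero_of_tendstoUniformlyOn h0 hunif (hcI k))
      (hψ.continuousAt (Icc_mem_nhds (hc k).1 (hc k).2))
      ((hψ.mono Ioo_subset_Icc_self).stronglyMeasurableAtFilter isOpen_Ioo _ (hc k))
  obtain ⟨M, hM⟩ := isCompact_Icc.exists_bound_of_continuousOn hψ
  obtain ⟨B, hB⟩ := exists_eventually_norm_div_sub_le hmaps hunif
  have hdom : ∀ᶠ t in 𝓝[≠] 0, ∀ k,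
      ‖s t k * ((∫ x in c k..h t (c k), ψ x) / t)‖ ≤ C * lam ^ k * (M * B) := by
    filter_upwards [hB] with t hBt k
    rw [norm_mul]
    exact mul_le_mul (hbd t k) ((norm_intervalIntegral_div_le hM (hcI k) (hmaps t (hcI k)) t).trans
      (mul_le_mul_of_nonneg_left (hBt _ (hcI k)) ((norm_nonneg _).trans (hM _ (hcI k)))))
      (norm_nonneg _) ((abs_nonneg _).trans (hbd t k))
  rw [show ∑' k, α (c k) * s0 k * ψ (c k) = ∑' k, s0 k * (ψ (c k) * α (c k)) from
    tsum_congr fun k => by ring]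
  exact ((tendsto_tsum_of_dominated_convergence (hgeom.mul_right (M * B)) hterm hdom).neg).congr
    fun t => (hrewrite t).symm

/-- claim (4.5) in the proof of Theorem `theformula`: convergence
of the singular part: `lim_{t→0} (1/t)∫ ψ · ∑_k s_{k,t}(H_{h_t(c_k)} - H_{c_k}) dx
= -∑_k α(c_k) s_k ψ(c_k)`. -/
theorem stmt18 (c : ℕ → ℝ) (hc : ∀ k, c k ∈ Set.Ioo (-1:ℝ) 1)
    (lam C : ℝ) (hlam : lam ∈ Set.Ioo (0:ℝ) 1) (hC : 0 < C)
    (s : ℝ → ℕ → ℝ) (s0 : ℕ → ℝ)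
    (hbd : ∀ t k, |s t k| ≤ C * lam ^ k)
    (hconv : ∀ k, Tendsto (fun t => s t k) (𝓝[≠] 0) (𝓝 (s0 k)))
    (h : ℝ → ℝ → ℝ)
    (hhom : ∀ t, IsHomeoI (h t) ∧ StrictMonoOn (h t) II)
    (h0 : ∀ x ∈ II, h 0 x = x)
    (α : ℝ → ℝ) (hαc : ContinuousOn α II)
    (hunif : TendstoUniformlyOn (fun t x => (h t x - x) / t) α (𝓝[≠] 0) II) :
    ∀ ψ : ℝ → ℝ, ContinuousOn ψ II →
      Tendsto (fun t =>
          (1/t) * ∫ x in II, ψ x * ∑' k, s t k * (Heav (h t (c k)) x - Heav (c k) x))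
        (𝓝[≠] 0) (𝓝 (-∑' k, α (c k) * s0 k * ψ (c k))) :=
  stmt18_general c hc lam C hlam s s0 hbd hconv h hhom h0 α hunif
end

section
/- Let ε > 0 and for each t ∈ (−ε,ε) let ρ_t: I → ℝ be a C¹ function, with sup_t ‖ρ_t‖_{C¹(I)} < ∞, such that the family of derivatives {ρ'_t} is uniformly equicontinuous on I and ρ'_t → ρ'_0 uniformly on I as t → 0. Let h_t: I → I be homeomorphisms with h_0 = id such that (h_t(x) − x)/t converges as t → 0, uniformly in x ∈ I, to a bounded function α: I → ℝ. Then for every continuous ψ: I → ℝ, lim_{t→0} (1/t) ∫_I ψ(x)·(ρ_t(x) − ρ_t(h_t(x))) dx = −∫_I ψ(x)·ρ'_0(x)·α(x) dx. -/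
open MeasureTheory Set Filter Topology
open scoped Classical

/-! By the mean value theorem and the equicontinuity of the `ρ'_t`, the difference quotient
`(ρ_t(h_t x) - ρ_t x)/t` equals `ρ'_t(x) · (h_t x - x)/t` up to an error
`o(|h_t x - x| / |t|) = o(1)`, uniformly in `x`. Both factors of the main term converge uniformly
to bounded limits, so the quotient converges uniformly to `ρ'_0 α` on `I`, and uniform convergence
on a compact interval passes under the integral against `ψ`. -/

section UniformConvergence

variable {ι α : Type*} {l : Filter ι} {s : Set α}

theorem tendstoUniformlyOn_of_eventually_abs_sub_le {F : ι → α → ℝ} {f : α → ℝ} (C : ℝ)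
    (h : ∀ η > 0, ∀ᶠ i in l, ∀ x ∈ s, |F i x - f x| ≤ C * η) :
    TendstoUniformlyOn F f l s := by
  rw [Metric.tendstoUniformlyOn_iff]
  intro ε hε
  have hC : 0 < |C| + 1 := by positivity
  filter_upwards [h (ε / (|C| + 1)) (by positivity)] with i hi x hx
  rw [Real.dist_eq, abs_sub_comm]
  calc |F i x - f x| ≤ C * (ε / (|C| + 1)) := hi x hx
    _ ≤ |C| * (ε / (|C| + 1)) := by gcongr; exact le_abs_self C
    _ < ε := by rw [mul_div_assoc', div_lt_iff₀ hC]; linarith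

theorem TendstoUniformlyOn.eventually_forall_abs_le {F : ι → α → ℝ} {f : α → ℝ} {C : ℝ}
    (hF : TendstoUniformlyOn F f l s) (hf : ∀ x ∈ s, |f x| ≤ C) :
    ∀ᶠ i in l, ∀ x ∈ s, |F i x| ≤ C + 1 := by
  simpa using (uniformContinuous_norm.comp_tendstoUniformlyOn hF).eventually_forall_le
    (lt_add_one C) (by simpa using hf)

theorem TendstoUniformlyOn.mul_of_abs_le {F G : ι → α → ℝ} {f g : α → ℝ} {A C : ℝ}
    (hF : TendstoUniformlyOn F f l s) (hG : TendstoUniformlyOn G g l s)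
    (hf : ∀ x ∈ s, |f x| ≤ A) (hg : ∀ x ∈ s, |g x| ≤ C) :
    TendstoUniformlyOn (fun i x => F i x * G i x) (fun x => f x * g x) l s := by
  refine tendstoUniformlyOn_of_eventually_abs_sub_le (A + 1 + C) fun η hη => ?_
  filter_upwards [hF.eventually_forall_abs_le hf, Metric.tendstoUniformlyOn_iff.mp hF η hη,
    Metric.tendstoUniformlyOn_iff.mp hG η hη] with i hFA hFf hGg x hx
  have hFf := hFf x hx
  have hGg := hGg x hx
  rw [Real.dist_eq, abs_sub_comm] at hFf hGg
  calc |F i x * G i x - f x * g x| = |F i x * (G i x - g x) + (F i x - f x) * g x| := by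
        congr 1; ring
    _ ≤ |F i x| * |G i x - g x| + |F i x - f x| * |g x| := by
        rw [← abs_mul, ← abs_mul]; exact abs_add_le _ _
    _ ≤ (A + 1) * η + η * C := by
        gcongr
        · exact (abs_nonneg _).trans (hFA x hx)
        · exact hFA x hx
        · exact hg x hx
    _ = (A + 1 + C) * η := by ring

end UniformConvergence

theorem abs_sub_sub_mul_le_of_hasDerivWithinAt {f f' : ℝ → ℝ} {s : Set ℝ}
    (hs : Convex ℝ s) (hf : ∀ z ∈ s, HasDerivWithinAt f (f' z) s z) {x y η : ℝ}
    (hx : x ∈ s) (hy : y ∈ s)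
    (hf' : ∀ z ∈ s, |z - x| ≤ |y - x| → |f' z - f' x| ≤ η) :
    |f y - f x - f' x * (y - x)| ≤ η * |y - x| := by
  have hsub : uIcc x y ⊆ s := by simpa only [segment_eq_uIcc] using hs.segment_subset hx hy
  have hg : ∀ z ∈ uIcc x y,
      HasDerivWithinAt (fun w => f w - f' x * w) (f' z - f' x) (uIcc x y) z := fun z hz =>
    ((hf z (hsub hz)).mono hsub).sub (by simpa using (hasDerivWithinAt_id z _).const_mul (f' x))
  have hg' : ∀ z ∈ uIcc x y, ‖f' z - f' x‖ ≤ η := fun z hz =>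
    hf' z (hsub hz) (abs_sub_left_of_mem_uIcc hz)
  have := (convex_uIcc x y).norm_image_sub_le_of_norm_hasDerivWithin_le hg hg'
    left_mem_uIcc right_mem_uIcc
  rw [Real.norm_eq_abs, Real.norm_eq_abs] at this
  convert this using 2
  ring

section DifferenceQuotient

variable {l : Filter ℝ} {s T : Set ℝ} {ρ dρ h : ℝ → ℝ → ℝ} {g α : ℝ → ℝ} {B C : ℝ}

theorem tendstoUniformlyOn_taylorRemainder_comp_div (hl : l ≤ 𝓝[≠] 0) (hs : Convex ℝ s)
    (hT : T ∈ l) (hderiv : ∀ t ∈ T, ∀ x ∈ s, HasDerivWithinAt (ρ t) (dρ t x) s x)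
    (hequi : ∀ η > 0, ∃ δ > 0, ∀ t ∈ T, ∀ x ∈ s, ∀ y ∈ s,
      |x - y| < δ → |dρ t x - dρ t y| < η)
    (hmaps : ∀ t ∈ T, MapsTo (h t) s s)
    (hunif : TendstoUniformlyOn (fun t x => (h t x - x) / t) α l s)
    (hα : ∀ x ∈ s, |α x| ≤ C) :
    TendstoUniformlyOn (fun t x => (ρ t (h t x) - ρ t x - dρ t x * (h t x - x)) / t) 0 l s := by
  refine tendstoUniformlyOn_of_eventually_abs_sub_le (C + 1) fun η hη => ?_
  obtain ⟨δ, hδ, hmod⟩ := hequi η hη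
  have hsmall : ∀ᶠ t in l, |t| * (C + 1) < δ := by
    have hcont : Continuous fun t : ℝ => |t| * (C + 1) := continuous_abs.mul continuous_const
    exact ((hcont.tendsto' 0 0 (by simp)).mono_left
      (hl.trans nhdsWithin_le_nhds)).eventually_lt_const hδ
  filter_upwards [hT, hunif.eventually_forall_abs_le hα, hsmall, hl self_mem_nhdsWithin]
    with t ht hq hst ht0 x hx
  have hclose : |h t x - x| < δ :=
    calc |h t x - x| = |t| * |(h t x - x) / t| := by
          rw [abs_div, mul_div_cancel₀ _ (abs_ne_zero.mpr ht0)]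
      _ ≤ |t| * (C + 1) := by gcongr; exact hq x hx
      _ < δ := hst
  have htaylor := abs_sub_sub_mul_le_of_hasDerivWithinAt hs (hderiv t ht) hx (hmaps t ht hx)
    fun z hz hzx => (hmod t ht z hz x hx (hzx.trans_lt hclose)).le
  calc |(ρ t (h t x) - ρ t x - dρ t x * (h t x - x)) / t - 0|
      = |ρ t (h t x) - ρ t x - dρ t x * (h t x - x)| / |t| := by rw [sub_zero, abs_div]
    _ ≤ η * |h t x - x| / |t| := by gcongr
    _ = η * |(h t x - x) / t| := by rw [abs_div, mul_div_assoc]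
    _ ≤ η * (C + 1) := by gcongr; exact hq x hx
    _ = (C + 1) * η := mul_comm _ _

theorem tendstoUniformlyOn_sub_comp_div (hl : l ≤ 𝓝[≠] 0) (hs : Convex ℝ s)
    (hT : T ∈ l) (hderiv : ∀ t ∈ T, ∀ x ∈ s, HasDerivWithinAt (ρ t) (dρ t x) s x)
    (hequi : ∀ η > 0, ∃ δ > 0, ∀ t ∈ T, ∀ x ∈ s, ∀ y ∈ s,
      |x - y| < δ → |dρ t x - dρ t y| < η)
    (hconv : TendstoUniformlyOn dρ g l s) (hg : ∀ x ∈ s, |g x| ≤ B)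
    (hmaps : ∀ t ∈ T, MapsTo (h t) s s)
    (hunif : TendstoUniformlyOn (fun t x => (h t x - x) / t) α l s)
    (hα : ∀ x ∈ s, |α x| ≤ C) :
    TendstoUniformlyOn (fun t x => (ρ t (h t x) - ρ t x) / t) (fun x => g x * α x) l s := by
  have hlin := hconv.mul_of_abs_le hunif hg hα
  have hrem :=
    tendstoUniformlyOn_taylorRemainder_comp_div hl hs hT hderiv hequi hmaps hunif hα
  refine ((hlin.fun_add hrem).congr (Eventually.of_forall fun t x _ => ?_)).congr_right
    fun x _ => add_zero _
  ring

end DifferenceQuotient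

theorem uIcc_neg_one_one_eq_II : uIcc (-1 : ℝ) 1 = II := uIcc_of_le (by norm_num)

theorem setIntegral_II_eq_intervalIntegral (f : ℝ → ℝ) :
    ∫ x in II, f x = ∫ x in (-1)..1, f x := by
  rw [intervalIntegral.integral_of_le (by norm_num), II, integral_Icc_eq_integral_Ioc]

theorem stmt19_general (ε : ℝ) (hε : 0 < ε) (ρ dρ : ℝ → ℝ → ℝ)
    (hderiv : ∀ t ∈ Set.Ioo (-ε) ε, ∀ x ∈ II, HasDerivWithinAt (ρ t) (dρ t x) II x)
    (hbd : ∃ B, ∀ t ∈ Set.Ioo (-ε) ε, ∀ x ∈ II, |ρ t x| ≤ B ∧ |dρ t x| ≤ B)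
    (hequi : ∀ η > 0, ∃ δ > 0, ∀ t ∈ Set.Ioo (-ε) ε, ∀ x ∈ II, ∀ y ∈ II,
      |x - y| < δ → |dρ t x - dρ t y| < η)
    (hconv : TendstoUniformlyOn (fun t => dρ t) (dρ 0) (𝓝[Set.Ioo (-ε) ε] 0) II)
    (h : ℝ → ℝ → ℝ) (hhom : ∀ t ∈ Set.Ioo (-ε) ε, IsHomeoI (h t))
    (α : ℝ → ℝ) (hαb : ∃ B, ∀ x ∈ II, |α x| ≤ B)
    (hunif : TendstoUniformlyOn (fun t x => (h t x - x) / t) α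
      (𝓝[Set.Ioo (-ε) ε \ {0}] 0) II) :
    ∀ ψ : ℝ → ℝ, ContinuousOn ψ II →
      Tendsto (fun t => (1/t) * ∫ x in II, ψ x * (ρ t x - ρ t (h t x)))
        (𝓝[Set.Ioo (-ε) ε \ {0}] 0)
        (𝓝 (-∫ x in II, ψ x * dρ 0 x * α x)) := by
  intro ψ hψ
  obtain ⟨B, hB⟩ := hbd
  obtain ⟨C, hα⟩ := hαb
  obtain ⟨D, hψD⟩ := isCompact_Icc.exists_bound_of_continuousOn hψ
  simp only [Real.norm_eq_abs] at hψD
  set l := 𝓝[Ioo (-ε) ε \ {0}] (0 : ℝ)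
  have hT : Ioo (-ε) ε ∈ l := mem_of_superset self_mem_nhdsWithin sdiff_subset
  have hconv' : TendstoUniformlyOn dρ (dρ 0) l II :=
    fun u hu => (hconv u hu).filter_mono (nhdsWithin_mono _ sdiff_subset)
  have hdρ₀ : ∀ x ∈ II, |dρ 0 x| ≤ B := fun x hx => (hB 0 ⟨by linarith, hε⟩ x hx).2
  have hquot := tendstoUniformlyOn_sub_comp_div (nhdsWithin_mono _ fun t ht => ht.2)
    (convex_Icc _ _) hT hderiv hequi hconv' hdρ₀ (fun t ht => (hhom t ht).2.mapsTo) hunif hα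
  have hψ_const : TendstoUniformlyOn (fun _ => ψ) ψ l II :=
    tendstoUniformlyOn_of_eventually_abs_sub_le 0 fun _ _ => .of_forall fun _ _ _ => by simp
  have hweighted := hψ_const.mul_of_abs_le hquot hψD fun x hx => by
    rw [abs_mul]
    exact mul_le_mul (hdρ₀ x hx) (hα x hx) (abs_nonneg _) ((abs_nonneg _).trans (hdρ₀ x hx))
  have hcont : ∀ t ∈ Ioo (-ε) ε,
      ContinuousOn (fun x => ψ x * ((ρ t (h t x) - ρ t x) / t)) II := fun t ht =>
    have hρ : ContinuousOn (ρ t) II := fun x hx => (hderiv t ht x hx).continuousWithinAt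
    hψ.mul (((hρ.comp (hhom t ht).1 (hhom t ht).2.mapsTo).sub hρ).div_const t)
  rw [← uIcc_neg_one_one_eq_II] at hweighted hcont
  have hlim := (hweighted.tendsto_intervalIntegral_of_continuousOn (μ := volume)
    (mem_of_superset hT hcont)).neg
  simp only [← setIntegral_II_eq_intervalIntegral] at hlim
  convert hlim using 2 with t
  · rw [← integral_neg, ← integral_const_mul]
    congr 1 with x
    ring
  · simp only [mul_assoc]

/-- claim (4.14) in the proof of Theorem `theformula`: convergence
of the regular part: `lim_{t→0} (1/t)∫ ψ (ρ_t - ρ_t∘h_t) dx = -∫ ψ ρ'_0 α dx` for a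
uniformly `C¹`-bounded, derivative-equicontinuous family `ρ_t`. -/
theorem stmt19 (ε : ℝ) (hε : 0 < ε) (ρ dρ : ℝ → ℝ → ℝ)
    (hderiv : ∀ t ∈ Set.Ioo (-ε) ε, ∀ x ∈ II, HasDerivWithinAt (ρ t) (dρ t x) II x)
    (hbd : ∃ B, ∀ t ∈ Set.Ioo (-ε) ε, ∀ x ∈ II, |ρ t x| ≤ B ∧ |dρ t x| ≤ B)
    (hequi : ∀ η > 0, ∃ δ > 0, ∀ t ∈ Set.Ioo (-ε) ε, ∀ x ∈ II, ∀ y ∈ II,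
      |x - y| < δ → |dρ t x - dρ t y| < η)
    (hconv : TendstoUniformlyOn (fun t => dρ t) (dρ 0) (𝓝[Set.Ioo (-ε) ε] 0) II)
    (h : ℝ → ℝ → ℝ) (hhom : ∀ t ∈ Set.Ioo (-ε) ε, IsHomeoI (h t))
    (h0 : ∀ x ∈ II, h 0 x = x)
    (α : ℝ → ℝ) (hαb : ∃ B, ∀ x ∈ II, |α x| ≤ B)
    (hunif : TendstoUniformlyOn (fun t x => (h t x - x) / t) α
      (𝓝[Set.Ioo (-ε) ε \ {0}] 0) II) :
    ∀ ψ : ℝ → ℝ, ContinuousOn ψ II →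
      Tendsto (fun t => (1/t) * ∫ x in II, ψ x * (ρ t x - ρ t (h t x)))
        (𝓝[Set.Ioo (-ε) ε \ {0}] 0)
        (𝓝 (-∫ x in II, ψ x * dρ 0 x * α x)) :=
  stmt19_general ε hε ρ dρ hderiv hbd hequi hconv h hhom α hαb hunif
end
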